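/- arXiv:2603.25531 — 2 statements merged into one kernel-verified Lean document; each statement's English description precedes it below -/
import Mathlib

section
/- Correctness of the SSTL-to-LTL_P translation (Theorem 2): let w_d be an SSTL trace and let σ be the same sequence of states viewed as an LTL_P trace (so position j coincides with tick k). Let τ be the translation that maps atoms to the corresponding state predicates, commutes with negation and conjunction, maps unbounded until to LTL until, and maps each bounded operator evaluated at an entry position j₀ using the guard within[a,b](k) := (j₀ + a ≤ k ≤ j₀ + b): τ(φ₁ U_{[a,b]} φ₂) := τ(φ₁) U (τ(φ₂) ∧ within[a,b]), τ(◇_{[a,b]}φ) := ◇(τ(φ) ∧ within[a,b]), τ(□_{[a,b]}φ) := □(within[a,b] → τ(φ)). Then for every SSTL formula φ and every tick k, (w_d,k) ⊨ φ if and only if (σ,k) ⊨ τ(φ). -/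
/-- SSTL formulas: `⊤ | (x_i ≥ 0) | ¬φ | φ₁ ∧ φ₂ | φ₁ U_{[a,b]} φ₂` with natural
interval endpoints. -/
inductive SSTLFormula (n : ℕ) : Type
  | top : SSTLFormula n
  | atom : Fin n → SSTLFormula n
  | not : SSTLFormula n → SSTLFormula n
  | and : SSTLFormula n → SSTLFormula n → SSTLFormula n
  | untl : ℕ → ℕ → SSTLFormula n → SSTLFormula n → SSTLFormula n

/-- Boolean semantics of SSTL over a discrete trace `w_d : ℕ → (Fin n → ℝ)`. -/
def SSTLSat {n : ℕ} (w_d : ℕ → Fin n → ℝ) : ℕ → SSTLFormula n → Prop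
  | _, .top => True
  | k, .atom i => w_d k i ≥ 0
  | k, .not φ => ¬ SSTLSat w_d k φ
  | k, .and φ₁ φ₂ => SSTLSat w_d k φ₁ ∧ SSTLSat w_d k φ₂
  | k, .untl a b φ₁ φ₂ => ∃ k' : ℕ, k + a ≤ k' ∧ k' ≤ k + b ∧ SSTLSat w_d k' φ₂ ∧
      ∀ k'' : ℕ, k ≤ k'' → k'' < k' → SSTLSat w_d k'' φ₁

/-- LTL_P formulas over states `Fin n → ℝ`.  Atoms are predicates over the current
position (the tick counter, an LTL_P state variable) and the current state.  The
constructor `entry` captures the current position `j₀` at which a time-bounded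
obligation begins, making it available to the guard `within[a,b]`. -/
inductive LTLPFormula (n : ℕ) : Type
  | atom : (ℕ → (Fin n → ℝ) → Prop) → LTLPFormula n
  | not : LTLPFormula n → LTLPFormula n
  | and : LTLPFormula n → LTLPFormula n → LTLPFormula n
  | or : LTLPFormula n → LTLPFormula n → LTLPFormula n
  | next : LTLPFormula n → LTLPFormula n
  | untl : LTLPFormula n → LTLPFormula n → LTLPFormula n
  | entry : (ℕ → LTLPFormula n) → LTLPFormula n

/-- Semantics of LTL_P over a trace `σ : ℕ → (Fin n → ℝ)` at position `j`. -/
def LTLPSat {n : ℕ} (σ : ℕ → Fin n → ℝ) : ℕ → LTLPFormula n → Prop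
  | j, .atom p => p j (σ j)
  | j, .not φ => ¬ LTLPSat σ j φ
  | j, .and φ₁ φ₂ => LTLPSat σ j φ₁ ∧ LTLPSat σ j φ₂
  | j, .or φ₁ φ₂ => LTLPSat σ j φ₁ ∨ LTLPSat σ j φ₂
  | j, .next φ => LTLPSat σ (j + 1) φ
  | j, .untl φ₁ φ₂ => ∃ k : ℕ, j ≤ k ∧ LTLPSat σ k φ₂ ∧
      ∀ l : ℕ, j ≤ l → l < k → LTLPSat σ l φ₁
  | j, .entry f => LTLPSat σ j (f j)

/-- The guard `within[a,b]` relative to the entry position `j₀`: it holds at position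
`k` iff `j₀ + a ≤ k ≤ j₀ + b`. -/
def within {n : ℕ} (j₀ a b : ℕ) : LTLPFormula n :=
  .atom (fun k _ => j₀ + a ≤ k ∧ k ≤ j₀ + b)

/-- The translation `τ` from SSTL to LTL_P: atoms map to the corresponding state
predicates, it commutes with negation and conjunction, and the bounded until,
evaluated at an entry position `j₀`, is mapped to
`τ(φ₁) U (τ(φ₂) ∧ within[a,b])` (from which the bounded-eventually and
bounded-always translations are derived). -/
def sstlToLTLP {n : ℕ} : SSTLFormula n → LTLPFormula n
  | .top => .atom (fun _ _ => True)
  | .atom i => .atom (fun _ s => s i ≥ 0)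
  | .not φ => .not (sstlToLTLP φ)
  | .and φ₁ φ₂ => .and (sstlToLTLP φ₁) (sstlToLTLP φ₂)
  | .untl a b φ₁ φ₂ =>
      .entry (fun j₀ => .untl (sstlToLTLP φ₁) (.and (sstlToLTLP φ₂) (within j₀ a b)))

/-! The translation is compositional, so the claim follows by structural induction
on `φ`. The only non-trivial case is the bounded until: the LTL_P until only asks its witness to
lie at or after the entry position `j₀`, and the guard `within[a,b]` sharpens this to the
window `[j₀ + a, j₀ + b]`, which is exactly the SSTL witness condition. -/

theorem LTLPSat_untl_and_within {n : ℕ} (σ : ℕ → Fin n → ℝ) (ψ₁ ψ₂ : LTLPFormula n)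
    (j a b : ℕ) :
    LTLPSat σ j (.untl ψ₁ (.and ψ₂ (within j a b))) ↔
      ∃ k, j + a ≤ k ∧ k ≤ j + b ∧ LTLPSat σ k ψ₂ ∧
        ∀ l, j ≤ l → l < k → LTLPSat σ l ψ₁ := by
  simp only [LTLPSat, within]
  constructor
  · rintro ⟨k, -, ⟨hψ₂, hlo, hhi⟩, hψ₁⟩
    exact ⟨k, hlo, hhi, hψ₂, hψ₁⟩
  · rintro ⟨k, hlo, hhi, hψ₂, hψ₁⟩
    exact ⟨k, le_of_add_le_left hlo, ⟨hψ₂, hlo, hhi⟩, hψ₁⟩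

/-- **Correctness of the SSTL-to-LTL_P translation (Theorem 2).**  Let `w_d` be an
SSTL trace and let `σ` be the same sequence of states viewed as an LTL_P trace (so
position `j` coincides with tick `k`).  Then for every SSTL formula `φ` and every tick
`k`, `(w_d,k) ⊨ φ` iff `(σ,k) ⊨ τ(φ)`. -/
theorem sstl_to_ltlp_correctness {n : ℕ} (w_d : ℕ → Fin n → ℝ)
    (φ : SSTLFormula n) (k : ℕ) :
    SSTLSat w_d k φ ↔ LTLPSat w_d k (sstlToLTLP φ) := by
  induction φ generalizing k with
  | top | atom => simp [SSTLSat, sstlToLTLP, LTLPSat]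
  | not φ ih => simp only [SSTLSat, sstlToLTLP, LTLPSat, ih]
  | and φ₁ φ₂ ih₁ ih₂ => simp only [SSTLSat, sstlToLTLP, LTLPSat, ih₁, ih₂]
  | untl a b φ₁ φ₂ ih₁ ih₂ =>
    rw [SSTLSat, sstlToLTLP, LTLPSat, LTLPSat_untl_and_within]
    simp only [ih₁, ih₂]
end

section
/- Forward direction of the STL–SSTL until equivalence: fix Δt > 0 and naturals a' ≤ b', let a = a'·Δt and b = b'·Δt, and let P₁, P₂ : ℝ≥0 → Prop and Q₁, Q₂ : ℕ → Prop satisfy P₁(t) ↔ Q₁(⌊t/Δt⌋) and P₂(t) ↔ Q₂(⌊t/Δt⌋) for all t ≥ 0, with P₁ and P₂ constant on each tick interval [kΔt,(k+1)Δt). If there exists t₁ ∈ [t+a, t+b] with P₂(t₁) and P₁(t₂) for all t₂ ∈ [t, t₁), then there exists k' with ⌊t/Δt⌋+a' ≤ k' ≤ ⌊t/Δt⌋+b' such that Q₂(k') and Q₁(k'') for all k'' with ⌊t/Δt⌋ ≤ k'' < k'. -/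
/-- **Forward direction of the STL–SSTL until equivalence.**  Under the hypotheses of
the until step (interval endpoints `a = a'·Δt`, `b = b'·Δt` with `a' ≤ b'` naturals,
equivalence of the satisfaction predicates at tick boundaries, and constancy of
`P₁, P₂` on each tick interval), the dense-time semantics of the bounded until at
time `t` implies the discrete-time semantics at tick `⌊t/Δt⌋₊`. -/
theorem stl_sstl_until_forward (Δt : ℝ) (hΔt : 0 < Δt) (a' b' : ℕ) (hab : a' ≤ b')
    (a b : ℝ) (ha : a = (a' : ℝ) * Δt) (hb : b = (b' : ℝ) * Δt)
    (P₁ P₂ : ℝ → Prop) (Q₁ Q₂ : ℕ → Prop)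
    (h₁ : ∀ t : ℝ, 0 ≤ t → (P₁ t ↔ Q₁ ⌊t / Δt⌋₊))
    (h₂ : ∀ t : ℝ, 0 ≤ t → (P₂ t ↔ Q₂ ⌊t / Δt⌋₊))
    (hc₁ : ∀ (k : ℕ) (t t' : ℝ), (k : ℝ) * Δt ≤ t → t < ((k : ℝ) + 1) * Δt →
      (k : ℝ) * Δt ≤ t' → t' < ((k : ℝ) + 1) * Δt → (P₁ t ↔ P₁ t'))
    (hc₂ : ∀ (k : ℕ) (t t' : ℝ), (k : ℝ) * Δt ≤ t → t < ((k : ℝ) + 1) * Δt →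
      (k : ℝ) * Δt ≤ t' → t' < ((k : ℝ) + 1) * Δt → (P₂ t ↔ P₂ t')) :
    ∀ t : ℝ, 0 ≤ t →
      (∃ t₁ : ℝ, t + a ≤ t₁ ∧ t₁ ≤ t + b ∧ P₂ t₁ ∧
          ∀ t₂ : ℝ, t ≤ t₂ → t₂ < t₁ → P₁ t₂) →
        (∃ k' : ℕ, ⌊t / Δt⌋₊ + a' ≤ k' ∧ k' ≤ ⌊t / Δt⌋₊ + b' ∧ Q₂ k' ∧
          ∀ k'' : ℕ, ⌊t / Δt⌋₊ ≤ k'' → k'' < k' → Q₁ k'') := by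
  intro t ht h
  obtain ⟨t₁, hlo, hhi, hP2, hP1⟩ := h
  subst ha hb
  have ht₁ : 0 ≤ t₁ := by
    have : (0:ℝ) ≤ (a' : ℝ) := Nat.cast_nonneg _
    nlinarith
  set k₀ := ⌊t / Δt⌋₊ with hk₀
  set k₁ := ⌊t₁ / Δt⌋₊ with hk₁
  have hdivt : 0 ≤ t / Δt := div_nonneg ht hΔt.le
  have hlo' : t / Δt + (a' : ℝ) ≤ t₁ / Δt := by
    rw [div_add' _ _ _ hΔt.ne', div_le_div_iff_of_pos_right hΔt]; linarith
  have hhi' : t₁ / Δt ≤ t / Δt + (b' : ℝ) := by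
    rw [div_add' _ _ _ hΔt.ne', div_le_div_iff_of_pos_right hΔt]; linarith
  have hk₁lo : k₀ + a' ≤ k₁ := by
    have := Nat.floor_le_floor (R := ℝ) (le_trans (le_of_eq rfl) hlo')
    rwa [Nat.floor_add_natCast hdivt] at this
  have hk₁hi : k₁ ≤ k₀ + b' := by
    have := Nat.floor_le_floor (R := ℝ) hhi'
    rwa [Nat.floor_add_natCast hdivt] at this
  refine ⟨k₁, hk₁lo, hk₁hi, (h₂ t₁ ht₁).mp hP2, ?_⟩
  intro k'' hk1 hk2
  -- witness point s = max t (k''*Δt)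
  set s := max t ((k'' : ℝ) * Δt) with hs
  have hs0 : 0 ≤ s := le_trans ht (le_max_left _ _)
  have hslow : (k'' : ℝ) * Δt ≤ s := le_max_right _ _
  have htup : t < ((k'' : ℝ) + 1) * Δt := by
    have : t / Δt < (k₀ : ℝ) + 1 := Nat.lt_floor_add_one _
    have hk : (k₀ : ℝ) ≤ (k'' : ℝ) := by exact_mod_cast hk1
    have := (div_lt_iff₀ hΔt).mp this
    nlinarith
  have hsup : s < ((k'' : ℝ) + 1) * Δt := by
    apply max_lt htup
    nlinarith
  have hst₁ : s < t₁ := by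
    have h1 : ((k'' : ℝ) + 1) * Δt ≤ (k₁ : ℝ) * Δt := by
      have : (k'' : ℝ) + 1 ≤ (k₁ : ℝ) := by exact_mod_cast hk2
      nlinarith
    have h2 : (k₁ : ℝ) * Δt ≤ t₁ := by
      have := Nat.floor_le (div_nonneg ht₁ hΔt.le)
      calc (k₁ : ℝ) * Δt ≤ (t₁ / Δt) * Δt := by nlinarith
        _ = t₁ := div_mul_cancel₀ _ hΔt.ne'
    linarith
  have hP1s : P₁ s := hP1 s (le_max_left _ _) hst₁
  have hfloor : ⌊s / Δt⌋₊ = k'' := by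
    rw [Nat.floor_eq_iff (div_nonneg hs0 hΔt.le)]
    constructor
    · rw [le_div_iff₀ hΔt]; linarith
    · rw [div_lt_iff₀ hΔt]; push_cast; linarith
  have := (h₁ s hs0).mp hP1s
  rwa [hfloor] at this
end
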